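/- Let d₁, d₂ ∈ ℝ² be linearly independent, let k : ℝ² → ℝ and Z : ℝ² → ℝ² be smooth periodic, and define for smooth φ : ℝ² → ℝ the bienergy-type functional G(φ) = ∫_Q [(Δφ(ξ) + div Z(ξ))² + k(ξ)²·‖∇φ(ξ) + Z(ξ)‖²] dξ. Suppose θ : ℝ² → ℝ is smooth, (m,n)-semiperiodic, and satisfies the Euler–Lagrange equation Δ(Δθ + div Z) = div(k²·(∇θ + Z)) on ℝ². Then for every smooth periodic β : ℝ² → ℝ and every t ∈ ℝ one has G(θ + tβ) = G(θ) + t²·∫_Q [(Δβ)² + k²·‖∇β‖²] dξ; in particular G(θ + tβ) ≥ G(θ). (This is the paper's Theorem 5.7: the Hessian of the bienergy is positive semi-definite at every critical point, so biharmonic unit vector fields on a 2-torus are stable.) -/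

import Mathlib

open MeasureTheory Real

noncomputable section

/-- The Euclidean plane ℝ². -/
abbrev E2 := EuclideanSpace ℝ (Fin 2)

/-- The flat Laplacian Δf = ∂²f/∂ξ₁² + ∂²f/∂ξ₂² on ℝ². -/
def lap (f : E2 → ℝ) (x : E2) : ℝ :=
  ∑ i : Fin 2,
    fderiv ℝ (fun y => fderiv ℝ f y (EuclideanSpace.single i 1)) x (EuclideanSpace.single i 1)

/-- The gradient of a function on ℝ², as a vector field. -/
def grad2 (f : E2 → ℝ) (x : E2) : E2 :=
  (WithLp.equiv 2 (Fin 2 → ℝ)).symm fun i => fderiv ℝ f x (EuclideanSpace.single i 1)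

/-- The divergence div X = ∂X₁/∂ξ₁ + ∂X₂/∂ξ₂ of a vector field on ℝ². -/
def div2 (X : E2 → E2) (x : E2) : ℝ :=
  ∑ i : Fin 2, fderiv ℝ (fun y => X y i) x (EuclideanSpace.single i 1)

/-- The fundamental cell Q = {s·d₁ + t·d₂ : s, t ∈ [0,1]}. -/
def cell (d₁ d₂ : E2) : Set E2 :=
  {ξ | ∃ s t : ℝ, s ∈ Set.Icc (0 : ℝ) 1 ∧ t ∈ Set.Icc (0 : ℝ) 1 ∧ ξ = s • d₁ + t • d₂}

/-- The bienergy-type functional G(φ) = ∫_Q [(Δφ + div Z)² + k²‖∇φ + Z‖²]. -/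
def G (d₁ d₂ : E2) (k : E2 → ℝ) (Z : E2 → E2) (φ : E2 → ℝ) : ℝ :=
  ∫ ξ in cell d₁ d₂, ((lap φ ξ + div2 Z ξ) ^ 2 + (k ξ) ^ 2 * ‖grad2 φ ξ + Z ξ‖ ^ 2)

lemma cell_swap (d₁ d₂ : E2) : cell d₁ d₂ = cell d₂ d₁ := by
  ext ξ; constructor <;> rintro ⟨s, t, hs, ht, rfl⟩ <;> exact ⟨t, s, ht, hs, by rw [add_comm]⟩

def ψ : E2 ≃ᵐ ℝ × ℝ :=
  (MeasurableEquiv.toLp 2 (Fin 2 → ℝ)).symm.trans MeasurableEquiv.finTwoArrow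

lemma ψ_mp : MeasurePreserving ψ volume volume :=
  (volume_preserving_finTwoArrow ℝ).comp (EuclideanSpace.volume_preserving_symm_measurableEquiv_toLp (Fin 2))

lemma ψ_symm_apply_zero (p : ℝ × ℝ) : (ψ.symm p) 0 = p.1 := rfl
lemma ψ_symm_apply_one (p : ℝ × ℝ) : (ψ.symm p) 1 = p.2 := rfl
lemma ψ_apply (x : E2) : ψ x = (x 0, x 1) := rfl

def Lmap (d₁ d₂ : E2) : E2 →L[ℝ] E2 :=
  LinearMap.toContinuousLinearMap
  { toFun := fun x => x 0 • d₁ + x 1 • d₂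
    map_add' := by
      intro x y
      simp only [PiLp.add_apply, add_smul]
      try module
    map_smul' := by
      intro c x
      simp only [PiLp.smul_apply, smul_eq_mul, RingHom.id_apply, smul_add, smul_smul]
      try module }

lemma Lmap_apply (d₁ d₂ : E2) (x : E2) : Lmap d₁ d₂ x = x 0 • d₁ + x 1 • d₂ := rfl

def Sq : Set E2 := {x : E2 | x 0 ∈ Set.Icc (0:ℝ) 1 ∧ x 1 ∈ Set.Icc (0:ℝ) 1}

lemma measurableSet_Sq : MeasurableSet Sq := by
  have h0 : Continuous (fun x : E2 => x 0) := (EuclideanSpace.proj (𝕜 := ℝ) (0 : Fin 2)).continuous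
  have h1 : Continuous (fun x : E2 => x 1) := (EuclideanSpace.proj (𝕜 := ℝ) (1 : Fin 2)).continuous
  exact ((measurableSet_Icc.preimage h0.measurable).inter
    (measurableSet_Icc.preimage h1.measurable))

lemma cell_eq_image (d₁ d₂ : E2) : cell d₁ d₂ = Lmap d₁ d₂ '' Sq := by
  ext ξ; constructor
  · rintro ⟨s, t, hs, ht, rfl⟩
    exact ⟨ψ.symm (s, t), ⟨hs, ht⟩, by rw [Lmap_apply, ψ_symm_apply_zero, ψ_symm_apply_one]⟩
  · rintro ⟨x, ⟨h0, h1⟩, rfl⟩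
    exact ⟨x 0, x 1, h0, h1, rfl⟩

lemma lin_indep_coeffs {d₁ d₂ : E2} (hd : LinearIndependent ℝ ![d₁, d₂]) :
    ∀ a b : ℝ, a • d₁ + b • d₂ = 0 → a = 0 ∧ b = 0 := by
  intro a b hab
  have := hd
  rw [LinearIndependent.pair_iff] at this
  · exact this a b hab

lemma Lmap_injOn {d₁ d₂ : E2} (hd : LinearIndependent ℝ ![d₁, d₂]) :
    Set.InjOn (Lmap d₁ d₂) Sq := by
  intro x _ y _ hxy
  rw [Lmap_apply, Lmap_apply] at hxy
  have h : (x 0 - y 0) • d₁ + (x 1 - y 1) • d₂ = 0 := by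
    rw [sub_smul, sub_smul]
    rw [sub_add_sub_comm, hxy, sub_self]
  obtain ⟨h0, h1⟩ := lin_indep_coeffs hd _ _ h
  ext i
  fin_cases i
  · exact sub_eq_zero.mp h0
  · exact sub_eq_zero.mp h1

lemma isCompact_cell (d₁ d₂ : E2) : IsCompact (cell d₁ d₂) := by
  have : cell d₁ d₂ = (fun p : ℝ × ℝ => p.1 • d₁ + p.2 • d₂) '' (Set.Icc 0 1 ×ˢ Set.Icc 0 1) := by
    ext ξ; constructor
    · rintro ⟨s, t, hs, ht, rfl⟩; exact ⟨(s, t), ⟨hs, ht⟩, rfl⟩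
    · rintro ⟨⟨s, t⟩, ⟨hs, ht⟩, rfl⟩; exact ⟨s, t, hs, ht, rfl⟩
  rw [this]
  exact ((isCompact_Icc.prod isCompact_Icc)).image (by fun_prop)

lemma contDiff_fderiv_apply' {F : Type*} [NormedAddCommGroup F] [NormedSpace ℝ F] {f : E2 → F}
    (hf : ContDiff ℝ (⊤:ℕ∞) f) (v : E2) : ContDiff ℝ (⊤:ℕ∞) (fun x => fderiv ℝ f x v) := by
  have h1 : ContDiff ℝ (⊤:ℕ∞) (fderiv ℝ f) := hf.fderiv_right (by exact_mod_cast le_refl _)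
  exact (ContinuousLinearMap.apply ℝ F v).contDiff.comp h1

lemma Sq_eq_image : Sq = ψ.symm '' (Set.Icc 0 1 ×ˢ Set.Icc 0 1) := by
  ext x; constructor
  · rintro ⟨h0, h1⟩
    exact ⟨(x 0, x 1), ⟨h0, h1⟩, by rw [← ψ_apply]; exact ψ.symm_apply_apply x⟩
  · rintro ⟨⟨s, t⟩, ⟨hs, ht⟩, rfl⟩
    exact ⟨hs, ht⟩

lemma integral_fderiv_dir {d₁ d₂ : E2} (hd : LinearIndependent ℝ ![d₁, d₂]) {f : E2 → ℝ}
    (hf : ContDiff ℝ (⊤:ℕ∞) f) (hp : ∀ x, f (x + d₂) = f x) :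
    ∫ ξ in cell d₁ d₂, fderiv ℝ f ξ d₂ = 0 := by
  set g : E2 → ℝ := fun ξ => fderiv ℝ f ξ d₂ with hg
  have hgc : Continuous g := (contDiff_fderiv_apply' hf d₂).continuous
  rw [cell_eq_image]
  rw [integral_image_eq_integral_abs_det_fderiv_smul volume measurableSet_Sq
      (fun x _ => (Lmap d₁ d₂).hasFDerivAt.hasFDerivWithinAt) (Lmap_injOn hd) g]
  rw [integral_smul]
  have hzero : ∫ x in Sq, g (Lmap d₁ d₂ x) = 0 := by
    rw [Sq_eq_image, (ψ_mp.symm ψ).setIntegral_image_emb ψ.symm.measurableEmbedding]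
    have hrw : ∀ p : ℝ × ℝ, g (Lmap d₁ d₂ (ψ.symm p)) = g (p.1 • d₁ + p.2 • d₂) := by
      intro p; rw [Lmap_apply, ψ_symm_apply_zero, ψ_symm_apply_one]
    simp only [hrw]
    have hint : IntegrableOn (fun p : ℝ × ℝ => g (p.1 • d₁ + p.2 • d₂))
        (Set.Icc 0 1 ×ˢ Set.Icc 0 1) volume := by
      apply ContinuousOn.integrableOn_compact (isCompact_Icc.prod isCompact_Icc)
      exact (hgc.comp (by fun_prop)).continuousOn
    rw [Measure.volume_eq_prod] at hint ⊢
    rw [setIntegral_prod _ hint]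
    have hinner : ∀ s : ℝ, ∫ t in Set.Icc (0:ℝ) 1, g (s • d₁ + t • d₂) = 0 := by
      intro s
      rw [integral_Icc_eq_integral_Ioc, ← intervalIntegral.integral_of_le zero_le_one]
      have hderiv : ∀ t ∈ Set.uIcc (0:ℝ) 1,
          HasDerivAt (fun t : ℝ => f (s • d₁ + t • d₂)) (g (s • d₁ + t • d₂)) t := by
        intro t _
        have hline : HasDerivAt (fun t : ℝ => s • d₁ + t • d₂) d₂ t := by
          simpa using (((hasDerivAt_id t).smul_const d₂).const_add (s • d₁))
        exact (hf.differentiable (by simp) _).hasFDerivAt.comp_hasDerivAt t hline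
      rw [intervalIntegral.integral_eq_sub_of_hasDerivAt hderiv
        ((hgc.comp (by fun_prop)).intervalIntegrable 0 1)]
      simp only [one_smul, zero_smul, add_zero]
      rw [hp (s • d₁), sub_self]
    simp only [hinner, integral_zero]
  rw [hzero, smul_zero]

lemma lin_indep_swap {d₁ d₂ : E2} (hd : LinearIndependent ℝ ![d₁, d₂]) :
    LinearIndependent ℝ ![d₂, d₁] := by
  rw [LinearIndependent.pair_iff]
  intro s t hst
  obtain ⟨h1, h2⟩ := lin_indep_coeffs hd t s (by rw [← hst]; abel)
  exact ⟨h2, h1⟩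

lemma exists_coeffs {d₁ d₂ : E2} (hd : LinearIndependent ℝ ![d₁, d₂]) (v : E2) :
    ∃ a b : ℝ, a • d₁ + b • d₂ = v := by
  have hsp : Submodule.span ℝ (Set.range ![d₁, d₂]) = ⊤ := by
    apply hd.span_eq_top_of_card_eq_finrank
    simp [finrank_euclideanSpace_fin]
  have hv : v ∈ Submodule.span ℝ ({d₁, d₂} : Set E2) := by
    have : Set.range ![d₁, d₂] = {d₁, d₂} := by
      simp [Matrix.range_cons, Matrix.range_empty, Set.pair_comm]
    rw [← this, hsp]; trivial
  exact Submodule.mem_span_pair.mp hv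

lemma integral_fderiv_zero {d₁ d₂ : E2} (hd : LinearIndependent ℝ ![d₁, d₂]) {f : E2 → ℝ}
    (hf : ContDiff ℝ (⊤:ℕ∞) f) (hp : ∀ x, f (x + d₁) = f x ∧ f (x + d₂) = f x) (v : E2) :
    ∫ ξ in cell d₁ d₂, fderiv ℝ f ξ v = 0 := by
  obtain ⟨a, b, rfl⟩ := exists_coeffs hd v
  have h2 : ∫ ξ in cell d₁ d₂, fderiv ℝ f ξ d₂ = 0 :=
    integral_fderiv_dir hd hf (fun x => (hp x).2)
  have h1 : ∫ ξ in cell d₁ d₂, fderiv ℝ f ξ d₁ = 0 := by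
    rw [cell_swap]
    exact integral_fderiv_dir (lin_indep_swap hd) hf (fun x => (hp x).1)
  have hint : ∀ w : E2, IntegrableOn (fun ξ => fderiv ℝ f ξ w) (cell d₁ d₂) volume :=
    fun w => (contDiff_fderiv_apply' hf w).continuous.continuousOn.integrableOn_compact
      (isCompact_cell d₁ d₂)
  have : ∀ ξ, fderiv ℝ f ξ (a • d₁ + b • d₂) = a * fderiv ℝ f ξ d₁ + b * fderiv ℝ f ξ d₂ := by
    intro ξ; rw [map_add, (fderiv ℝ f ξ).map_smul, (fderiv ℝ f ξ).map_smul]; rfl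
  simp only [this]
  rw [integral_add ((hint d₁).const_mul a) ((hint d₂).const_mul b),
    integral_const_mul, integral_const_mul, h1, h2]
  ring



def es (i : Fin 2) : E2 := EuclideanSpace.single i 1

lemma contDiff_lap {f : E2 → ℝ} (hf : ContDiff ℝ (⊤:ℕ∞) f) : ContDiff ℝ (⊤:ℕ∞) (lap f) := by
  unfold lap
  exact ContDiff.sum fun i _ => contDiff_fderiv_apply' (contDiff_fderiv_apply' hf _) _

lemma contDiff_comp_apply {X : E2 → E2} (hX : ContDiff ℝ (⊤:ℕ∞) X) (i : Fin 2) :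
    ContDiff ℝ (⊤:ℕ∞) (fun y => X y i) := by
  exact (EuclideanSpace.proj (𝕜 := ℝ) i).contDiff.comp hX

lemma contDiff_div2 {X : E2 → E2} (hX : ContDiff ℝ (⊤:ℕ∞) X) : ContDiff ℝ (⊤:ℕ∞) (div2 X) := by
  unfold div2
  exact ContDiff.sum fun i _ => contDiff_fderiv_apply' (contDiff_comp_apply hX i) _

lemma grad2_apply (f : E2 → ℝ) (x : E2) (i : Fin 2) :
    grad2 f x i = fderiv ℝ f x (EuclideanSpace.single i 1) := rfl

lemma contDiff_grad2 {f : E2 → ℝ} (hf : ContDiff ℝ (⊤:ℕ∞) f) : ContDiff ℝ (⊤:ℕ∞) (grad2 f) := by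
  exact (contDiff_piLp 2).mpr fun i => contDiff_fderiv_apply' hf _

lemma fderiv_shift {F : Type*} [NormedAddCommGroup F] [NormedSpace ℝ F] {f : E2 → F}
    (hf : Differentiable ℝ f) (d x : E2) :
    fderiv ℝ (fun y => f (y + d)) x = fderiv ℝ f (x + d) :=
  (((hf (x + d)).hasFDerivAt.comp x ((hasFDerivAt_id x).add_const d))).fderiv

lemma fderiv_periodic_shift {F : Type*} [NormedAddCommGroup F] [NormedSpace ℝ F] {f : E2 → F}
    (hf : Differentiable ℝ f) {d : E2} {c : F} (hp : ∀ x, f (x + d) = f x + c) (x : E2) :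
    fderiv ℝ f (x + d) = fderiv ℝ f x := by
  rw [← fderiv_shift hf d x, funext hp, fderiv_add_const]

lemma diffTop {F : Type*} [NormedAddCommGroup F] [NormedSpace ℝ F] {f : E2 → F}
    (hf : ContDiff ℝ (⊤:ℕ∞) f) : Differentiable ℝ f :=
  hf.differentiable (by simp)

-- first derivative of a shift-periodic function is periodic
lemma Dper {F : Type*} [NormedAddCommGroup F] [NormedSpace ℝ F] {f : E2 → F}
    (hf : ContDiff ℝ (⊤:ℕ∞) f) {d : E2} {c : F} (hp : ∀ x, f (x + d) = f x + c) (v x : E2) :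
    fderiv ℝ f (x + d) v = fderiv ℝ f x v := by
  rw [fderiv_periodic_shift (diffTop hf) hp]

lemma Dper' {f : E2 → ℝ} (hf : ContDiff ℝ (⊤:ℕ∞) f) {d : E2} (hp : ∀ x, f (x + d) = f x)
    (v x : E2) : fderiv ℝ f (x + d) v = fderiv ℝ f x v :=
  Dper hf (c := 0) (fun x => by rw [hp, add_zero]) v x

lemma lap_periodic {f : E2 → ℝ} (hf : ContDiff ℝ (⊤:ℕ∞) f) {d : E2} {c : ℝ}
    (hp : ∀ x, f (x + d) = f x + c) (x : E2) : lap f (x + d) = lap f x := by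
  unfold lap
  refine Finset.sum_congr rfl fun i _ => ?_
  exact Dper' (contDiff_fderiv_apply' hf _) (fun y => Dper hf hp _ y) _ x

lemma div2_periodic {X : E2 → E2} (hX : ContDiff ℝ (⊤:ℕ∞) X) {d : E2}
    (hp : ∀ x, X (x + d) = X x) (x : E2) : div2 X (x + d) = div2 X x := by
  unfold div2
  refine Finset.sum_congr rfl fun i _ => ?_
  exact Dper' (contDiff_comp_apply hX i) (fun y => by rw [hp]) _ x

lemma grad2_periodic {f : E2 → ℝ} (hf : ContDiff ℝ (⊤:ℕ∞) f) {d : E2} {c : ℝ}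
    (hp : ∀ x, f (x + d) = f x + c) (x : E2) : grad2 f (x + d) = grad2 f x := by
  ext i
  rw [grad2_apply, grad2_apply, Dper hf hp]

lemma fderiv_comb {θ β : E2 → ℝ} (hθ : ContDiff ℝ (⊤:ℕ∞) θ) (hβ : ContDiff ℝ (⊤:ℕ∞) β)
    (t : ℝ) (x v : E2) :
    fderiv ℝ (fun ξ => θ ξ + t * β ξ) x v = fderiv ℝ θ x v + t * fderiv ℝ β x v := by
  rw [fderiv_fun_add (diffTop hθ x) ((diffTop hβ x).const_mul t),
    fderiv_const_mul (diffTop hβ x)]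
  simp

lemma contDiff_comb {θ β : E2 → ℝ} (hθ : ContDiff ℝ (⊤:ℕ∞) θ) (hβ : ContDiff ℝ (⊤:ℕ∞) β)
    (t : ℝ) : ContDiff ℝ (⊤:ℕ∞) (fun ξ => θ ξ + t * β ξ) :=
  hθ.add (contDiff_const.mul hβ)

lemma lap_comb {θ β : E2 → ℝ} (hθ : ContDiff ℝ (⊤:ℕ∞) θ) (hβ : ContDiff ℝ (⊤:ℕ∞) β)
    (t : ℝ) (x : E2) :
    lap (fun ξ => θ ξ + t * β ξ) x = lap θ x + t * lap β x := by
  unfold lap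
  rw [Finset.mul_sum, ← Finset.sum_add_distrib]
  refine Finset.sum_congr rfl fun i _ => ?_
  have h1 : (fun y => fderiv ℝ (fun ξ => θ ξ + t * β ξ) y (EuclideanSpace.single i 1))
      = fun y => fderiv ℝ θ y (EuclideanSpace.single i 1)
        + t * fderiv ℝ β y (EuclideanSpace.single i 1) :=
    funext fun y => fderiv_comb hθ hβ t y _
  rw [h1]
  exact fderiv_comb (contDiff_fderiv_apply' hθ _) (contDiff_fderiv_apply' hβ _) t x _

lemma grad2_comb {θ β : E2 → ℝ} (hθ : ContDiff ℝ (⊤:ℕ∞) θ) (hβ : ContDiff ℝ (⊤:ℕ∞) β)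
    (t : ℝ) (x : E2) :
    grad2 (fun ξ => θ ξ + t * β ξ) x = grad2 θ x + t • grad2 β x := by
  ext i
  rw [PiLp.add_apply, PiLp.smul_apply, grad2_apply, grad2_apply, grad2_apply,
    fderiv_comb hθ hβ t x]
  rfl

lemma fderiv_mul_apply {a b : E2 → ℝ} (ha : ContDiff ℝ (⊤:ℕ∞) a) (hb : ContDiff ℝ (⊤:ℕ∞) b)
    (x v : E2) :
    fderiv ℝ (fun y => a y * b y) x v = a x * fderiv ℝ b x v + b x * fderiv ℝ a x v := by
  rw [fderiv_fun_mul (diffTop ha x) (diffTop hb x)]; simp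

section W
variable (k : E2 → ℝ) (Z : E2 → E2) (θ β : E2 → ℝ)

def uu : E2 → ℝ := fun ξ => lap θ ξ + div2 Z ξ

def hh (i : Fin 2) : E2 → ℝ :=
  fun y => k y ^ 2 * (fderiv ℝ θ y (EuclideanSpace.single i 1) + Z y i)

def WW : E2 → E2 := fun ξ => (WithLp.equiv 2 (Fin 2 → ℝ)).symm fun i =>
  uu Z θ ξ * fderiv ℝ β ξ (EuclideanSpace.single i 1)
  - β ξ * fderiv ℝ (uu Z θ) ξ (EuclideanSpace.single i 1)
  + β ξ * hh k Z θ i ξ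

variable {k Z θ β}
variable (hk : ContDiff ℝ (⊤:ℕ∞) k) (hZ : ContDiff ℝ (⊤:ℕ∞) Z)
  (hθ : ContDiff ℝ (⊤:ℕ∞) θ) (hβ : ContDiff ℝ (⊤:ℕ∞) β)

include hθ hZ in
lemma contDiff_uu : ContDiff ℝ (⊤:ℕ∞) (uu Z θ) :=
  (contDiff_lap hθ).add (contDiff_div2 hZ)

include hk hZ hθ in
lemma contDiff_hh (i : Fin 2) : ContDiff ℝ (⊤:ℕ∞) (hh k Z θ i) :=
  (hk.pow 2).mul ((contDiff_fderiv_apply' hθ _).add (contDiff_comp_apply hZ i))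

include hk hZ hθ hβ in
lemma contDiff_WW_comp (i : Fin 2) : ContDiff ℝ (⊤:ℕ∞) (fun y => WW k Z θ β y i) := by
  have : (fun y => WW k Z θ β y i) = fun y =>
      uu Z θ y * fderiv ℝ β y (EuclideanSpace.single i 1)
      - β y * fderiv ℝ (uu Z θ) y (EuclideanSpace.single i 1)
      + β y * hh k Z θ i y := rfl
  rw [this]
  exact (((contDiff_uu hZ hθ).mul (contDiff_fderiv_apply' hβ _)).sub
    (hβ.mul (contDiff_fderiv_apply' (contDiff_uu hZ hθ) _))).add (hβ.mul (contDiff_hh hk hZ hθ i))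

include hk hZ hθ hβ in
lemma div2_WW (hEL : ∀ ξ : E2, lap (fun y => lap θ y + div2 Z y) ξ
      = div2 (fun y => (k y) ^ 2 • (grad2 θ y + Z y)) ξ) (x : E2) :
    div2 (WW k Z θ β) x = uu Z θ x * lap β x
      + ∑ i : Fin 2, hh k Z θ i x * fderiv ℝ β x (EuclideanSpace.single i 1) := by
  have hKcomp : ∀ i : Fin 2, (fun y => ((k y) ^ 2 • (grad2 θ y + Z y) : E2) i) = hh k Z θ i := by
    intro i; funext y
    simp only [PiLp.smul_apply, PiLp.add_apply, grad2_apply, smul_eq_mul, hh]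
  have hterm : ∀ i : Fin 2,
      fderiv ℝ (fun y => WW k Z θ β y i) x (EuclideanSpace.single i 1)
      = (uu Z θ x * fderiv ℝ (fun y => fderiv ℝ β y (EuclideanSpace.single i 1)) x (EuclideanSpace.single i 1)
          + β x * (fderiv ℝ (hh k Z θ i) x (EuclideanSpace.single i 1)
            - fderiv ℝ (fun y => fderiv ℝ (uu Z θ) y (EuclideanSpace.single i 1)) x (EuclideanSpace.single i 1)))
        + hh k Z θ i x * fderiv ℝ β x (EuclideanSpace.single i 1) := by
    intro i
    have hA : ContDiff ℝ (⊤:ℕ∞) (fun y => uu Z θ y * fderiv ℝ β y (EuclideanSpace.single i 1)) :=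
      (contDiff_uu hZ hθ).mul (contDiff_fderiv_apply' hβ _)
    have hB : ContDiff ℝ (⊤:ℕ∞) (fun y => β y * fderiv ℝ (uu Z θ) y (EuclideanSpace.single i 1)) :=
      hβ.mul (contDiff_fderiv_apply' (contDiff_uu hZ hθ) _)
    have hC : ContDiff ℝ (⊤:ℕ∞) (fun y => β y * hh k Z θ i y) := hβ.mul (contDiff_hh hk hZ hθ i)
    have hcomp : (fun y => WW k Z θ β y i) = fun y =>
        (uu Z θ y * fderiv ℝ β y (EuclideanSpace.single i 1)
        - β y * fderiv ℝ (uu Z θ) y (EuclideanSpace.single i 1))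
        + β y * hh k Z θ i y := by
      rfl
    rw [hcomp]
    rw [fderiv_fun_add ((diffTop hA x).fun_sub (diffTop hB x)) (diffTop hC x)]
    simp only [ContinuousLinearMap.add_apply]
    rw [fderiv_fun_sub (diffTop hA x) (diffTop hB x)]
    simp only [ContinuousLinearMap.sub_apply]
    rw [fderiv_mul_apply (contDiff_uu hZ hθ) (contDiff_fderiv_apply' hβ _),
      fderiv_mul_apply hβ (contDiff_fderiv_apply' (contDiff_uu hZ hθ) _),
      fderiv_mul_apply hβ (contDiff_hh hk hZ hθ i)]
    ring
  unfold div2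
  simp only [hterm]
  rw [Finset.sum_add_distrib, Finset.sum_add_distrib, ← Finset.mul_sum, ← Finset.mul_sum]
  have hlapβ : ∑ i : Fin 2, fderiv ℝ (fun y => fderiv ℝ β y (EuclideanSpace.single i 1)) x
      (EuclideanSpace.single i 1) = lap β x := rfl
  have hcancel : ∑ i : Fin 2, (fderiv ℝ (hh k Z θ i) x (EuclideanSpace.single i 1)
      - fderiv ℝ (fun y => fderiv ℝ (uu Z θ) y (EuclideanSpace.single i 1)) x
        (EuclideanSpace.single i 1)) = 0 := by
    rw [Finset.sum_sub_distrib]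
    have h1 : ∑ i : Fin 2, fderiv ℝ (hh k Z θ i) x (EuclideanSpace.single i 1)
        = div2 (fun y => (k y) ^ 2 • (grad2 θ y + Z y)) x := by
      unfold div2
      exact Finset.sum_congr rfl fun i _ => by rw [hKcomp i]
    have h2 : ∑ i : Fin 2, fderiv ℝ (fun y => fderiv ℝ (uu Z θ) y (EuclideanSpace.single i 1)) x
        (EuclideanSpace.single i 1) = lap (fun y => lap θ y + div2 Z y) x := rfl
    rw [h1, h2, hEL x, sub_self]
  rw [hlapβ, hcancel, mul_zero, add_zero]
end W



lemma integral_div2_zero {d₁ d₂ : E2} (hd : LinearIndependent ℝ ![d₁, d₂]) {W : E2 → E2}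
    (hWc : ∀ i : Fin 2, ContDiff ℝ (⊤:ℕ∞) (fun y => W y i))
    (hWp : ∀ (i : Fin 2) (x : E2), W (x + d₁) i = W x i ∧ W (x + d₂) i = W x i) :
    ∫ ξ in cell d₁ d₂, div2 W ξ = 0 := by
  unfold div2
  rw [integral_finset_sum]
  · refine Finset.sum_eq_zero fun i _ => ?_
    exact integral_fderiv_zero hd (hWc i) (fun x => hWp i x) _
  · intro i _
    exact (contDiff_fderiv_apply' (hWc i) _).continuous.continuousOn.integrableOn_compact
      (isCompact_cell d₁ d₂)

/-- Theorem 5.7: at a critical point θ of the bienergy G, the second variation is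
positive semi-definite; in fact G(θ + tβ) = G(θ) + t²∫_Q[(Δβ)² + k²‖∇β‖²] ≥ G(θ). -/
theorem biharmonic_unit_vector_fields_are_stable
    (d₁ d₂ : E2) (hd : LinearIndependent ℝ ![d₁, d₂])
    (k : E2 → ℝ) (Z : E2 → E2)
    (hk : ContDiff ℝ (⊤ : ℕ∞) k) (hZ : ContDiff ℝ (⊤ : ℕ∞) Z)
    (hk_per : ∀ ξ : E2, k (ξ + d₁) = k ξ ∧ k (ξ + d₂) = k ξ)
    (hZ_per : ∀ ξ : E2, Z (ξ + d₁) = Z ξ ∧ Z (ξ + d₂) = Z ξ)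
    (θ : E2 → ℝ) (hθ : ContDiff ℝ (⊤ : ℕ∞) θ)
    (m n : ℤ)
    (hθ_semiper : ∀ ξ : E2,
      θ (ξ + d₁) = θ ξ + 2 * π * (m : ℝ) ∧ θ (ξ + d₂) = θ ξ + 2 * π * (n : ℝ))
    (hEL : ∀ ξ : E2, lap (fun y => lap θ y + div2 Z y) ξ
      = div2 (fun y => (k y) ^ 2 • (grad2 θ y + Z y)) ξ) :
    ∀ β : E2 → ℝ, ContDiff ℝ (⊤ : ℕ∞) β →
      (∀ ξ : E2, β (ξ + d₁) = β ξ ∧ β (ξ + d₂) = β ξ) →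
      ∀ t : ℝ,
        (G d₁ d₂ k Z (fun ξ => θ ξ + t * β ξ)
          = G d₁ d₂ k Z θ
            + t ^ 2 * ∫ ξ in cell d₁ d₂, ((lap β ξ) ^ 2 + (k ξ) ^ 2 * ‖grad2 β ξ‖ ^ 2))
        ∧ G d₁ d₂ k Z θ ≤ G d₁ d₂ k Z (fun ξ => θ ξ + t * β ξ) := by
  intro β hβ hβ_per t
  -- periodicity facts
  have huu_per : ∀ x : E2, uu Z θ (x + d₁) = uu Z θ x ∧ uu Z θ (x + d₂) = uu Z θ x := by
    intro x
    constructor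
    · show lap θ (x + d₁) + div2 Z (x + d₁) = lap θ x + div2 Z x
      rw [lap_periodic hθ (fun y => (hθ_semiper y).1) x, div2_periodic hZ (fun y => (hZ_per y).1) x]
    · show lap θ (x + d₂) + div2 Z (x + d₂) = lap θ x + div2 Z x
      rw [lap_periodic hθ (fun y => (hθ_semiper y).2) x, div2_periodic hZ (fun y => (hZ_per y).2) x]
  have hhh_per : ∀ (i : Fin 2) (x : E2),
      hh k Z θ i (x + d₁) = hh k Z θ i x ∧ hh k Z θ i (x + d₂) = hh k Z θ i x := by
    intro i x
    constructor
    · show k (x + d₁) ^ 2 * _ = k x ^ 2 * _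
      rw [(hk_per x).1, Dper hθ (fun y => (hθ_semiper y).1) _ x, (hZ_per x).1]
    · show k (x + d₂) ^ 2 * _ = k x ^ 2 * _
      rw [(hk_per x).2, Dper hθ (fun y => (hθ_semiper y).2) _ x, (hZ_per x).2]
  have hWW_per : ∀ (i : Fin 2) (x : E2),
      WW k Z θ β (x + d₁) i = WW k Z θ β x i ∧ WW k Z θ β (x + d₂) i = WW k Z θ β x i := by
    intro i x
    constructor
    · show uu Z θ (x + d₁) * fderiv ℝ β (x + d₁) _ - β (x + d₁) * fderiv ℝ (uu Z θ) (x + d₁) _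
        + β (x + d₁) * hh k Z θ i (x + d₁) = _
      rw [(huu_per x).1, (hhh_per i x).1, (hβ_per x).1,
        Dper' hβ (fun y => (hβ_per y).1) _ x,
        Dper' (contDiff_uu hZ hθ) (fun y => (huu_per y).1) _ x]
      rfl
    · show uu Z θ (x + d₂) * fderiv ℝ β (x + d₂) _ - β (x + d₂) * fderiv ℝ (uu Z θ) (x + d₂) _
        + β (x + d₂) * hh k Z θ i (x + d₂) = _
      rw [(huu_per x).2, (hhh_per i x).2, (hβ_per x).2,
        Dper' hβ (fun y => (hβ_per y).2) _ x,
        Dper' (contDiff_uu hZ hθ) (fun y => (huu_per y).2) _ x]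
      rfl
  have hcross : ∫ ξ in cell d₁ d₂, div2 (WW k Z θ β) ξ = 0 :=
    integral_div2_zero hd (fun i => contDiff_WW_comp hk hZ hθ hβ i) hWW_per
  -- pointwise expansion
  have hpt : ∀ ξ : E2,
      (lap (fun ξ => θ ξ + t * β ξ) ξ + div2 Z ξ) ^ 2
        + (k ξ) ^ 2 * ‖grad2 (fun ξ => θ ξ + t * β ξ) ξ + Z ξ‖ ^ 2
      = ((lap θ ξ + div2 Z ξ) ^ 2 + (k ξ) ^ 2 * ‖grad2 θ ξ + Z ξ‖ ^ 2)
        + (t ^ 2 * ((lap β ξ) ^ 2 + (k ξ) ^ 2 * ‖grad2 β ξ‖ ^ 2)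
          + (2 * t) * div2 (WW k Z θ β) ξ) := by
    intro ξ
    have hinner : (k ξ) ^ 2 * (inner ℝ (grad2 θ ξ + Z ξ) (grad2 β ξ) : ℝ)
        = ∑ i : Fin 2, hh k Z θ i ξ * fderiv ℝ β ξ (EuclideanSpace.single i 1) := by
      rw [PiLp.inner_apply, Finset.mul_sum]
      refine Finset.sum_congr rfl fun i _ => ?_
      simp only [RCLike.inner_apply, conj_trivial, PiLp.add_apply, grad2_apply, hh]
      ring
    have hregroup : grad2 θ ξ + t • grad2 β ξ + Z ξ = (grad2 θ ξ + Z ξ) + t • grad2 β ξ := by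
      abel
    rw [lap_comb hθ hβ t ξ, grad2_comb hθ hβ t ξ, div2_WW hk hZ hθ hβ hEL ξ,
      hregroup, norm_add_sq_real, real_inner_smul_right, norm_smul]
    have habs : (‖t‖ * ‖grad2 β ξ‖) ^ 2 = t ^ 2 * ‖grad2 β ξ‖ ^ 2 := by
      rw [mul_pow, Real.norm_eq_abs, sq_abs]
    rw [habs, ← hinner]
    have huv : uu Z θ ξ = lap θ ξ + div2 Z ξ := rfl
    rw [huv]
    ring
  -- integrability
  have hAint : IntegrableOn
      (fun ξ => (lap θ ξ + div2 Z ξ) ^ 2 + (k ξ) ^ 2 * ‖grad2 θ ξ + Z ξ‖ ^ 2)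
      (cell d₁ d₂) volume := by
    have h1 := (contDiff_lap hθ).continuous.add (contDiff_div2 hZ).continuous
    have h2 := ((contDiff_grad2 hθ).continuous.add hZ.continuous).norm
    exact (((h1.pow 2).add ((hk.continuous.pow 2).mul
      (h2.pow 2)))).continuousOn.integrableOn_compact (isCompact_cell d₁ d₂)
  have hBint : IntegrableOn
      (fun ξ => (lap β ξ) ^ 2 + (k ξ) ^ 2 * ‖grad2 β ξ‖ ^ 2) (cell d₁ d₂) volume := by
    have h1 := (contDiff_lap hβ).continuous
    have h2 := (contDiff_grad2 hβ).continuous.norm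
    exact (((h1.pow 2).add ((hk.continuous.pow 2).mul
      (h2.pow 2)))).continuousOn.integrableOn_compact (isCompact_cell d₁ d₂)
  have hCint : IntegrableOn (fun ξ => div2 (WW k Z θ β) ξ) (cell d₁ d₂) volume := by
    have : Continuous (div2 (WW k Z θ β)) := by
      unfold div2
      exact continuous_finset_sum _ fun i _ =>
        (contDiff_fderiv_apply' (contDiff_WW_comp hk hZ hθ hβ i) _).continuous
    exact this.continuousOn.integrableOn_compact (isCompact_cell d₁ d₂)
  -- assemble
  have hmain : G d₁ d₂ k Z (fun ξ => θ ξ + t * β ξ)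
      = G d₁ d₂ k Z θ
        + t ^ 2 * ∫ ξ in cell d₁ d₂, ((lap β ξ) ^ 2 + (k ξ) ^ 2 * ‖grad2 β ξ‖ ^ 2) := by
    unfold G
    simp only [hpt]
    have hB2 : IntegrableOn
        (fun ξ => t ^ 2 * ((lap β ξ) ^ 2 + (k ξ) ^ 2 * ‖grad2 β ξ‖ ^ 2)) (cell d₁ d₂) volume :=
      hBint.const_mul (t ^ 2)
    have hC2 : IntegrableOn
        (fun ξ => 2 * t * div2 (WW k Z θ β) ξ) (cell d₁ d₂) volume :=
      hCint.const_mul (2 * t)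
    have hDint : IntegrableOn
        (fun ξ => t ^ 2 * ((lap β ξ) ^ 2 + (k ξ) ^ 2 * ‖grad2 β ξ‖ ^ 2)
          + 2 * t * div2 (WW k Z θ β) ξ) (cell d₁ d₂) volume := hB2.add hC2
    rw [integral_add hAint hDint, integral_add hB2 hC2,
      MeasureTheory.integral_const_mul, MeasureTheory.integral_const_mul, hcross, mul_zero, add_zero]
  refine ⟨hmain, ?_⟩
  rw [hmain]
  have hnonneg : 0 ≤ ∫ ξ in cell d₁ d₂, ((lap β ξ) ^ 2 + (k ξ) ^ 2 * ‖grad2 β ξ‖ ^ 2) := by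
    refine setIntegral_nonneg (isCompact_cell d₁ d₂).isClosed.measurableSet fun ξ _ => ?_
    exact add_nonneg (sq_nonneg _) (mul_nonneg (sq_nonneg _) (sq_nonneg _))
  nlinarith [sq_nonneg t]
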